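/- arXiv:1411.4687 — 3 statements merged into one kernel-verified Lean document; each statement's English description precedes it below -/
import Mathlib

section
/- Let W_k ≥ 0, V_* ≥ 0 and k ∈ {1,…,d}. Suppose the compactly supported Borel probability measure μ on ℝ^d × ℝ^d satisfies supp(μ) ⊆ ℝ^d × ([0,V_*]^{k−1} × [0,W_k] × [0,V_*]^{d−k}), i.e. every (y,w) ∈ supp(μ) has 0 ≤ w_k ≤ W_k and 0 ≤ w_j ≤ V_* for j ≠ k. Then for every (x,v) ∈ ℝ^d × ℝ^d with v_k ≥ W_k one has ⟨ξ[μ](x,v), e_k⟩ ≤ 0, and for every (x,v) with v_k ≤ 0 one has ⟨ξ[μ](x,v), e_k⟩ ≥ 0, where e_k is the k-th standard basis vector of ℝ^d. -/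
/-! The support of `μ` is conull, and on it the `k`-th component `φ(‖x - y‖) (w_k - v_k)` of the
integrand has the sign of `w_k - v_k`, which the bounds on the support fix once `v_k ≥ W_k` or
`v_k ≤ 0`. -/

open MeasureTheory Metric Set

/-- The (topological) support of a measure: points all of whose open
neighborhoods have positive measure. -/
def msupp {α : Type*} [TopologicalSpace α] [MeasurableSpace α]
    (μ : Measure α) : Set α :=
  {x | ∀ U : Set α, IsOpen U → x ∈ U → 0 < μ U}

/-- The Cucker–Smale interaction kernel
`ξ[μ](x,v) = ∫ φ(‖x - y‖) (w - v) dμ(y,w)`. -/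
noncomputable def xi {d : ℕ} (φ : ℝ → ℝ)
    (μ : Measure (EuclideanSpace ℝ (Fin d) × EuclideanSpace ℝ (Fin d)))
    (x v : EuclideanSpace ℝ (Fin d)) : EuclideanSpace ℝ (Fin d) :=
  ∫ p, φ (‖x - p.1‖) • (p.2 - v) ∂μ

lemma msupp_eq_support {α : Type*} [TopologicalSpace α] [MeasurableSpace α]
    (μ : Measure α) : msupp μ = μ.support := by
  ext x
  simp only [msupp, Measure.support_eq_forall_isOpen, mem_ofPred_eq]
  exact forall_congr' fun U => forall_comm

lemma ae_mem_msupp {α : Type*} [TopologicalSpace α] [HereditarilyLindelofSpace α]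
    [MeasurableSpace α] (μ : Measure α) : ∀ᵐ p ∂μ, p ∈ msupp μ := by
  rw [msupp_eq_support]
  exact Measure.support_mem_ae

/-- For non-integrable `f` the Bochner integral is the junk value `0`, and `L 0 = 0`. -/
lemma ContinuousLinearMap.apply_integral_nonneg_of_ae {α E : Type*} [MeasurableSpace α]
    {μ : Measure α} [NormedAddCommGroup E] [NormedSpace ℝ E] [CompleteSpace E]
    (L : E →L[ℝ] ℝ) {f : α → E} (hf : ∀ᵐ a ∂μ, 0 ≤ L (f a)) :
    0 ≤ L (∫ a, f a ∂μ) := by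
  by_cases hint : Integrable f μ
  · rw [← L.integral_comp_comm hint]
    exact integral_nonneg_of_ae hf
  · simp [integral_undef hint]

lemma ContinuousLinearMap.apply_integral_nonpos_of_ae {α E : Type*} [MeasurableSpace α]
    {μ : Measure α} [NormedAddCommGroup E] [NormedSpace ℝ E] [CompleteSpace E]
    (L : E →L[ℝ] ℝ) {f : α → E} (hf : ∀ᵐ a ∂μ, L (f a) ≤ 0) :
    L (∫ a, f a ∂μ) ≤ 0 := by
  simpa using (-L).apply_integral_nonneg_of_ae (hf.mono fun a ha => by simpa using ha)

section Kernel

variable {d : ℕ} {φ : ℝ → ℝ}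
  {μ : Measure (EuclideanSpace ℝ (Fin d) × EuclideanSpace ℝ (Fin d))}
  {x v : EuclideanSpace ℝ (Fin d)} {k : Fin d}

lemma xi_apply_nonneg_of_ae (hφ : ∀ r, 0 ≤ φ r) (h : ∀ᵐ p ∂μ, v k ≤ p.2 k) :
    0 ≤ xi φ μ x v k := by
  refine (EuclideanSpace.proj k).apply_integral_nonneg_of_ae ?_
  filter_upwards [h] with p hp
  simpa using mul_nonneg (hφ ‖x - p.1‖) (sub_nonneg.2 hp)

lemma xi_apply_nonpos_of_ae (hφ : ∀ r, 0 ≤ φ r) (h : ∀ᵐ p ∂μ, p.2 k ≤ v k) :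
    xi φ μ x v k ≤ 0 := by
  refine (EuclideanSpace.proj k).apply_integral_nonpos_of_ae ?_
  filter_upwards [h] with p hp
  simpa using mul_nonpos_of_nonneg_of_nonpos (hφ ‖x - p.1‖) (sub_nonpos.2 hp)

end Kernel

theorem stmt0_general {d : ℕ} (φ : ℝ → ℝ)
    (hφp : ∀ r : ℝ, 0 < φ r)
    (μ : Measure (EuclideanSpace ℝ (Fin d) × EuclideanSpace ℝ (Fin d)))
    (k : Fin d) (Wk Vs : ℝ)
    (hsupp : ∀ p ∈ msupp μ,
      (0 ≤ p.2 k ∧ p.2 k ≤ Wk) ∧ ∀ j : Fin d, j ≠ k → 0 ≤ p.2 j ∧ p.2 j ≤ Vs)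
    (x v : EuclideanSpace ℝ (Fin d)) :
    (Wk ≤ v k → xi φ μ x v k ≤ 0) ∧ (v k ≤ 0 → 0 ≤ xi φ μ x v k) := by
  have hφ : ∀ r, 0 ≤ φ r := fun r => (hφp r).le
  refine ⟨fun hv => xi_apply_nonpos_of_ae hφ ?_, fun hv => xi_apply_nonneg_of_ae hφ ?_⟩
  · filter_upwards [ae_mem_msupp μ] with p hp using (hsupp p hp).1.2.trans hv
  · filter_upwards [ae_mem_msupp μ] with p hp using hv.trans (hsupp p hp).1.1

theorem stmt0 {d : ℕ} (hd : 0 < d) (φ : ℝ → ℝ) (hφc : Continuous φ)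
    (hφa : Antitone φ) (hφp : ∀ r : ℝ, 0 < φ r)
    (μ : Measure (EuclideanSpace ℝ (Fin d) × EuclideanSpace ℝ (Fin d)))
    [IsProbabilityMeasure μ] (hcs : IsCompact (msupp μ))
    (k : Fin d) (Wk Vs : ℝ) (hWk : 0 ≤ Wk) (hVs : 0 ≤ Vs)
    (hsupp : ∀ p ∈ msupp μ,
      (0 ≤ p.2 k ∧ p.2 k ≤ Wk) ∧ ∀ j : Fin d, j ≠ k → 0 ≤ p.2 j ∧ p.2 j ≤ Vs)
    (x v : EuclideanSpace ℝ (Fin d)) :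
    (Wk ≤ v k → xi φ μ x v k ≤ 0) ∧ (v k ≤ 0 → 0 ≤ xi φ μ x v k) :=
  stmt0_general φ hφp μ k Wk Vs hsupp x v
end

section
/- Let φ : ℝ → ℝ be continuous, nonincreasing and positive. Let X, V : [0, ∞) → [0, ∞) be locally absolutely continuous functions satisfying X'(t) ≤ V(t) and V'(t) ≤ −φ(2X(t))·V(t) for almost every t ≥ 0. Suppose there exists X_M ≥ X(0) such that V(0) < ∫_{X(0)}^{X_M} φ(2s) ds. Then X(t) ≤ X_M and V(t) ≤ V(0)·e^{−φ(2X_M)·t} for every t ≥ 0. -/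
open MeasureTheory Set intervalIntegral

private lemma primCont (f : ℝ → ℝ) (hf : LocallyIntegrableOn f (Ici 0)) :
    ContinuousOn (fun t => ∫ s in (0:ℝ)..t, f s) (Ici 0) := by
  intro x hx
  have hx0 : (0:ℝ) ≤ x := hx
  have h1 : IntegrableOn f (Icc 0 (x+1)) volume :=
    hf.integrableOn_compact_subset (Icc_subset_Ici_self) isCompact_Icc
  have h2 : ContinuousOn (fun t => ∫ s in (0:ℝ)..t, f s) (Icc 0 (x+1)) := by
    have := continuousOn_primitive_interval (a := (0:ℝ)) (b := x+1) (μ := volume) (f := f) ?_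
    · rwa [uIcc_of_le (by linarith : (0:ℝ) ≤ x+1)] at this
    · rwa [uIcc_of_le (by linarith : (0:ℝ) ≤ x+1)]
  have h3 : ContinuousWithinAt (fun t => ∫ s in (0:ℝ)..t, f s) (Icc 0 (x+1)) x :=
    h2 x ⟨hx0, by linarith⟩
  apply h3.mono_of_mem_nhdsWithin
  have : Ici (0:ℝ) ∩ Iio (x+1) ∈ nhdsWithin x (Ici 0) :=
    inter_mem_nhdsWithin _ (Iio_mem_nhds (by linarith))
  exact Filter.mem_of_superset this (fun y hy => ⟨hy.1, hy.2.le⟩)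


private lemma expkey {c ε u : ℝ} (hc : 0 < c) (hε : 0 < ε) (hu : 0 < u)
    (h1 : u ≤ ε / (c * c)) (h2 : u ≤ 1 / (2 * c)) :
    1 ≤ Real.exp ((ε - c) * u) * (1 + c * u) := by
  rcases le_total c ε with hce | hce
  · have hh : (1:ℝ) ≤ Real.exp ((ε - c) * u) := by
      rw [Real.one_le_exp_iff]
      exact mul_nonneg (by linarith) hu.le
    nlinarith [mul_pos hc hu]
  · have hcu : (c - ε) * u ≤ 1/2 := by
      have ha : (c - ε) * u ≤ c * u := by nlinarith
      have hb : c * u ≤ c * (1 / (2 * c)) := mul_le_mul_of_nonneg_left h2 hc.le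
      have hcq : c * (1 / (2 * c)) = 1/2 := by
        field_simp
      linarith
    have he1 : 1 - (c - ε) * u ≤ Real.exp (-((c - ε) * u)) := by
      have := Real.add_one_le_exp (-((c - ε) * u))
      linarith
    have he2 : Real.exp ((ε - c) * u) = Real.exp (-((c - ε) * u)) := by
      congr 1; ring
    have hpos : (0:ℝ) < 1 - (c - ε) * u := by linarith
    have h6 : c * c * u ≤ ε := by
      rw [le_div_iff₀ (by positivity : (0:ℝ) < c * c)] at h1
      nlinarith
    have h7 : c * c * u * u ≤ ε * u := mul_le_mul_of_nonneg_right h6 hu.le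
    have h8 : (c - ε) * c * u * u ≤ c * c * u * u := by nlinarith [mul_nonneg (mul_nonneg (mul_nonneg hε.le hc.le) hu.le) hu.le]
    have hprod : 1 ≤ (1 - (c - ε) * u) * (1 + c * u) := by nlinarith [mul_pos hε hu]
    rw [he2]
    have hcu0 : (0:ℝ) ≤ 1 + c * u := by nlinarith [mul_pos hc hu]
    nlinarith [Real.exp_pos (-((c - ε) * u)), mul_le_mul_of_nonneg_right he1 hcu0]

set_option maxHeartbeats 1000000 in
theorem stmt12 (φ : ℝ → ℝ) (hφc : Continuous φ) (hφa : Antitone φ)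
    (hφp : ∀ r : ℝ, 0 < φ r)
    (X V X' V' : ℝ → ℝ)
    (hXnn : ∀ t : ℝ, 0 ≤ t → 0 ≤ X t) (hVnn : ∀ t : ℝ, 0 ≤ t → 0 ≤ V t)
    -- local absolute continuity on [0,∞): they are integrals of their
    -- (locally integrable) a.e. derivatives
    (hX'int : LocallyIntegrableOn X' (Set.Ici 0))
    (hV'int : LocallyIntegrableOn V' (Set.Ici 0))
    (hXac : ∀ t : ℝ, 0 ≤ t → X t = X 0 + ∫ s in (0 : ℝ)..t, X' s)
    (hVac : ∀ t : ℝ, 0 ≤ t → V t = V 0 + ∫ s in (0 : ℝ)..t, V' s)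
    (hXode : ∀ᵐ t : ℝ, 0 ≤ t → X' t ≤ V t)
    (hVode : ∀ᵐ t : ℝ, 0 ≤ t → V' t ≤ -φ (2 * X t) * V t)
    (XM : ℝ) (hXM : X 0 ≤ XM)
    (hflock : V 0 < ∫ s in (X 0)..XM, φ (2 * s)) :
    ∀ t : ℝ, 0 ≤ t → X t ≤ XM ∧ V t ≤ V 0 * Real.exp (-φ (2 * XM) * t) := by
  -- interval integrability of locally integrable functions
  have hii : ∀ f : ℝ → ℝ, LocallyIntegrableOn f (Ici 0) → ∀ r t : ℝ, 0 ≤ r → r ≤ t →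
      IntervalIntegrable f volume r t := by
    intro f hf r t hr hrt
    have h := hf.integrableOn_compact_subset
      (t := Icc r t) (fun y hy => hr.trans hy.1) isCompact_Icc
    have h2 : IntegrableOn f (uIcc r t) volume := by rwa [uIcc_of_le hrt]
    exact h2.intervalIntegrable
  -- interval integrability of continuous-on-Ici functions
  have hci : ∀ f : ℝ → ℝ, ContinuousOn f (Ici 0) → ∀ r t : ℝ, 0 ≤ r → r ≤ t →
      IntervalIntegrable f volume r t := by
    intro f hf r t hr hrt
    apply ContinuousOn.intervalIntegrable
    apply hf.mono
    rw [uIcc_of_le hrt]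
    exact fun y hy => hr.trans hy.1
  -- continuity of X and V on [0,∞)
  have hXcont : ContinuousOn X (Ici 0) := by
    apply ContinuousOn.congr (continuousOn_const.add (primCont X' hX'int))
    exact fun t ht => hXac t ht
  have hVcont : ContinuousOn V (Ici 0) := by
    apply ContinuousOn.congr (continuousOn_const.add (primCont V' hV'int))
    exact fun t ht => hVac t ht
  -- continuity of auxiliary functions
  have hφXcont : ContinuousOn (fun s => φ (2 * X s)) (Ici 0) :=
    hφc.comp_continuousOn (continuousOn_const.mul hXcont)
  have hgcont : ContinuousOn (fun s => φ (2 * X s) * V s) (Ici 0) := hφXcont.mul hVcont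
  -- basic integral identities
  have hVsub : ∀ r t : ℝ, 0 ≤ r → r ≤ t → V t - V r = ∫ s in r..t, V' s := by
    intro r t hr hrt
    rw [hVac t (hr.trans hrt), hVac r hr]
    have := integral_add_adjacent_intervals (hii V' hV'int 0 r le_rfl hr)
      (hii V' hV'int r t hr hrt)
    linarith
  have hXsub : ∀ r t : ℝ, 0 ≤ r → r ≤ t → X t - X r = ∫ s in r..t, X' s := by
    intro r t hr hrt
    rw [hXac t (hr.trans hrt), hXac r hr]
    have := integral_add_adjacent_intervals (hii X' hX'int 0 r le_rfl hr)
      (hii X' hX'int r t hr hrt)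
    linarith
  -- key differential inequalities in integral form
  have hVkey : ∀ r t : ℝ, 0 ≤ r → r ≤ t →
      V t ≤ V r - ∫ s in r..t, φ (2 * X s) * V s := by
    intro r t hr hrt
    have h1 : (∫ s in r..t, V' s) ≤ ∫ s in r..t, -(φ (2 * X s) * V s) := by
      apply integral_mono_ae_restrict hrt (hii V' hV'int r t hr hrt)
      · exact ((hci _ hgcont r t hr hrt).neg)
      · have h2 : ∀ᵐ s ∂(volume.restrict (Icc r t)), 0 ≤ s → V' s ≤ -φ (2 * X s) * V s :=
          ae_restrict_of_ae hVode
        have h3 : ∀ᵐ s ∂(volume.restrict (Icc r t)), s ∈ Icc r t :=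
          ae_restrict_mem measurableSet_Icc
        filter_upwards [h2, h3] with s hs hs'
        have := hs (hr.trans hs'.1)
        linarith
    rw [intervalIntegral.integral_neg] at h1
    have := hVsub r t hr hrt
    linarith
  have hXkey : ∀ r t : ℝ, 0 ≤ r → r ≤ t → X t - X r ≤ ∫ s in r..t, V s := by
    intro r t hr hrt
    rw [hXsub r t hr hrt]
    apply integral_mono_ae_restrict hrt (hii X' hX'int r t hr hrt)
      (hci V hVcont r t hr hrt)
    have h2 : ∀ᵐ s ∂(volume.restrict (Icc r t)), 0 ≤ s → X' s ≤ V s :=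
      ae_restrict_of_ae hXode
    have h3 : ∀ᵐ s ∂(volume.restrict (Icc r t)), s ∈ Icc r t :=
      ae_restrict_mem measurableSet_Icc
    filter_upwards [h2, h3] with s hs hs'
    exact hs (hr.trans hs'.1)
  -- V is nonincreasing
  have hVmono : ∀ r t : ℝ, 0 ≤ r → r ≤ t → V t ≤ V r := by
    intro r t hr hrt
    have h1 := hVkey r t hr hrt
    have h2 : (0:ℝ) ≤ ∫ s in r..t, φ (2 * X s) * V s := by
      apply intervalIntegral.integral_nonneg hrt
      intro s hs
      exact mul_nonneg (hφp _).le (hVnn s (hr.trans hs.1))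
    linarith
  have hV0 : ∀ t : ℝ, 0 ≤ t → V t ≤ V 0 := fun t ht => hVmono 0 t le_rfl ht
  -- the potential function F
  set F : ℝ → ℝ := fun x => ∫ s in (X 0)..x, φ (2 * s) with hF
  have hφ2cont : Continuous (fun s : ℝ => φ (2 * s)) := hφc.comp (continuous_const.mul continuous_id)
  have hFsub : ∀ u v : ℝ, F v - F u = ∫ s in u..v, φ (2 * s) := by
    intro u v
    exact integral_interval_sub_left (hφ2cont.intervalIntegrable _ _)
      (hφ2cont.intervalIntegrable _ _)
  have hFconc : ∀ u v : ℝ, F v - F u ≤ φ (2 * u) * (v - u) := by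
    intro u v
    rw [hFsub u v]
    rcases le_total u v with h | h
    · have : (∫ s in u..v, φ (2 * s)) ≤ ∫ s in u..v, φ (2 * u) := by
        apply integral_mono_on h (hφ2cont.intervalIntegrable _ _)
          (intervalIntegrable_const)
        intro s hs
        exact hφa (by linarith [hs.1])
      rw [intervalIntegral.integral_const, smul_eq_mul] at this
      linarith
    · rw [intervalIntegral.integral_symm]
      have : (∫ s in v..u, φ (2 * u)) ≤ ∫ s in v..u, φ (2 * s) := by
        apply integral_mono_on h intervalIntegrable_const (hφ2cont.intervalIntegrable _ _)
        intro s hs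
        exact hφa (by linarith [hs.2])
      rw [intervalIntegral.integral_const, smul_eq_mul] at this
      nlinarith
  have hF0 : F (X 0) = 0 := integral_same
  have hflock' : V 0 < F XM := hflock
  -- Lyapunov inequality via continuous induction
  have lyap : ∀ ε : ℝ, 0 < ε → ∀ t : ℝ, 0 ≤ t → V t + F (X t) ≤ V 0 + ε * t := by
    intro ε hε t ht
    set ψ : ℝ → ℝ := fun s => V 0 + ε * s - V s - F (X s) with hψdef
    have hFcont : Continuous F :=
      continuous_primitive (fun a b => hφ2cont.intervalIntegrable a b) (X 0)
    have hψcont : ContinuousOn ψ (Ici 0) :=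
      ((continuousOn_const.add (continuousOn_const.mul continuousOn_id)).sub hVcont).sub
        (hFcont.comp_continuousOn hXcont)
    have hsub : Icc 0 t ⊆ {s : ℝ | 0 ≤ ψ s} := by
      apply IsClosed.Icc_subset_of_forall_exists_gt
      · have heq : {s : ℝ | 0 ≤ ψ s} ∩ Icc 0 t = Icc 0 t ∩ ψ ⁻¹' (Ici 0) := by
          ext s; simp [and_comm]
        rw [heq]
        exact (hψcont.mono Icc_subset_Ici_self).preimage_isClosed_of_isClosed
          isClosed_Icc isClosed_Ici
      · show 0 ≤ ψ 0
        simp [hψdef, hF0]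
      · rintro x ⟨hxS, hx0, hxt⟩ y hy
        have hx0' : (0:ℝ) ≤ x := hx0
        -- continuity of s ↦ φ (2 X s) at x within Ici 0
        have hcx : ContinuousWithinAt (fun s => φ (2 * X s)) (Ici 0) x := hφXcont x hx0'
        have hV0pos : (0:ℝ) < V 0 + 1 := by linarith [hVnn 0 le_rfl]
        obtain ⟨δ, hδpos, hδ⟩ := Metric.continuousWithinAt_iff.mp hcx (ε / (V 0 + 1))
          (div_pos hε hV0pos)
        set z : ℝ := min (min (x + δ/2) t) y with hzdef
        have hxz : x < z := by
          apply lt_min (lt_min (by linarith) hxt) hy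
        have hzt : z ≤ t := le_trans (min_le_left _ _) (min_le_right _ _)
        have hzy : z ≤ y := min_le_right _ _
        have hzx : z - x ≤ δ/2 := by
          have : z ≤ x + δ/2 := le_trans (min_le_left _ _) (min_le_left _ _)
          linarith
        have hz0 : (0:ℝ) ≤ z := hx0'.trans hxz.le
        refine ⟨z, ?_, hxz, hzy⟩
        show 0 ≤ ψ z
        -- the estimates
        have A1 : V z ≤ V x - ∫ s in x..z, φ (2 * X s) * V s := hVkey x z hx0' hxz.le
        have A2 : F (X z) - F (X x) ≤ φ (2 * X x) * (X z - X x) := hFconc (X x) (X z)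
        have A3 : X z - X x ≤ ∫ s in x..z, V s := hXkey x z hx0' hxz.le
        have A3' : φ (2 * X x) * (X z - X x) ≤ ∫ s in x..z, φ (2 * X x) * V s := by
          rw [intervalIntegral.integral_const_mul]
          exact mul_le_mul_of_nonneg_left A3 (hφp _).le
        have A4 : (∫ s in x..z, φ (2 * X s) * V s) - (∫ s in x..z, φ (2 * X x) * V s)
            = ∫ s in x..z, (φ (2 * X s) - φ (2 * X x)) * V s := by
          rw [← intervalIntegral.integral_sub (hci _ hgcont x z hx0' hxz.le)
            ((hci V hVcont x z hx0' hxz.le).const_mul _)]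
          congr 1
          ext s
          ring
        have A5 : -(ε * V 0 / (V 0 + 1)) * (z - x)
            ≤ ∫ s in x..z, (φ (2 * X s) - φ (2 * X x)) * V s := by
          have hconst : (∫ s in x..z, -(ε * V 0 / (V 0 + 1)))
              ≤ ∫ s in x..z, (φ (2 * X s) - φ (2 * X x)) * V s := by
            apply integral_mono_on hxz.le intervalIntegrable_const
            · apply ContinuousOn.intervalIntegrable
              apply ContinuousOn.mul ((hφXcont.sub continuousOn_const).mono ?_) (hVcont.mono ?_)
              all_goals rw [uIcc_of_le hxz.le]; exact fun s hs => hx0'.trans hs.1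
            · intro s hs
              have hs0 : (0:ℝ) ≤ s := hx0'.trans hs.1
              have hdist : dist s x < δ := by
                rw [Real.dist_eq, abs_of_nonneg (by linarith [hs.1])]
                linarith [hs.2, hzx]
              have hφd := hδ hs0 hdist
              rw [Real.dist_eq] at hφd
              have h1 : -(ε / (V 0 + 1)) ≤ φ (2 * X s) - φ (2 * X x) := by
                have := abs_lt.mp hφd
                linarith [this.1]
              have h2 : 0 ≤ V s := hVnn s hs0
              have h3 : V s ≤ V 0 := hV0 s hs0
              have h4 : -(ε / (V 0 + 1)) * V s ≤ (φ (2 * X s) - φ (2 * X x)) * V s :=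
                mul_le_mul_of_nonneg_right h1 h2
              have h6 : ε / (V 0 + 1) * V s ≤ ε / (V 0 + 1) * V 0 :=
                mul_le_mul_of_nonneg_left h3 (div_pos hε hV0pos).le
              have heq : ε / (V 0 + 1) * V 0 = ε * V 0 / (V 0 + 1) := by ring
              nlinarith
          rw [intervalIntegral.integral_const, smul_eq_mul] at hconst
          linarith [hconst]
        have A6 : ε * V 0 / (V 0 + 1) * (z - x) ≤ ε * (z - x) := by
          apply mul_le_mul_of_nonneg_right ?_ (by linarith : (0:ℝ) ≤ z - x)
          rw [div_le_iff₀ hV0pos]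
          nlinarith [hVnn 0 le_rfl]
        have hψx : 0 ≤ ψ x := hxS
        simp only [hψdef] at hψx ⊢
        linarith
    have hψt : 0 ≤ ψ t := hsub ⟨ht, le_rfl⟩
    simp only [hψdef] at hψt
    linarith
  -- X stays below XM
  have hXle : ∀ t : ℝ, 0 ≤ t → X t ≤ XM := by
    intro t ht
    by_contra hcon
    push_neg at hcon
    have hFlt : F XM < F (X t) := by
      have h1 : F (X t) - F XM = ∫ s in XM..(X t), φ (2 * s) := hFsub XM (X t)
      have h2 : φ (2 * X t) * (X t - XM) ≤ ∫ s in XM..(X t), φ (2 * s) := by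
        have : (∫ s in XM..(X t), φ (2 * X t)) ≤ ∫ s in XM..(X t), φ (2 * s) := by
          apply integral_mono_on hcon.le intervalIntegrable_const
            (hφ2cont.intervalIntegrable _ _)
          intro s hs
          exact hφa (by linarith [hs.2])
        rwa [intervalIntegral.integral_const, smul_eq_mul, mul_comm] at this
      nlinarith [mul_pos (hφp (2 * X t)) (by linarith : (0:ℝ) < X t - XM)]
    have hFV : F (X t) ≤ V 0 := by
      rcases eq_or_lt_of_le ht with h | h
      · rw [← h]
        rw [hF0]
        exact hVnn 0 le_rfl
      · by_contra hc
        push_neg at hc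
        have hεp : 0 < (F (X t) - V 0) / (2 * t) := div_pos (by linarith) (by linarith)
        have hl := lyap _ hεp t ht
        have hVt := hVnn t ht
        have ht2 : (F (X t) - V 0) / (2 * t) * t = (F (X t) - V 0) / 2 := by
          field_simp
        rw [ht2] at hl
        linarith
    linarith
  -- Gronwall estimate
  set c : ℝ := φ (2 * XM) with hcdef
  have hcpos : 0 < c := hφp _
  have hVc : ∀ r t : ℝ, 0 ≤ r → r ≤ t → V t * (1 + c * (t - r)) ≤ V r := by
    intro r t hr hrt
    have h1 := hVkey r t hr hrt
    have h2 : (∫ s in r..t, c * V s) ≤ ∫ s in r..t, φ (2 * X s) * V s := by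
      apply integral_mono_on hrt ((hci V hVcont r t hr hrt).const_mul _)
        (hci _ hgcont r t hr hrt)
      intro s hs
      have hs0 : (0:ℝ) ≤ s := hr.trans hs.1
      apply mul_le_mul_of_nonneg_right ?_ (hVnn s hs0)
      exact hφa (by linarith [hXle s hs0])
    have h3 : (∫ s in r..t, V t) ≤ ∫ s in r..t, V s := by
      apply integral_mono_on hrt intervalIntegrable_const (hci V hVcont r t hr hrt)
      intro s hs
      exact hVmono s t (hr.trans hs.1) hs.2
    rw [intervalIntegral.integral_const, smul_eq_mul] at h3
    rw [intervalIntegral.integral_const_mul] at h2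
    nlinarith [hVnn t (hr.trans hrt)]
  have gron : ∀ ε : ℝ, 0 < ε → ∀ t : ℝ, 0 ≤ t →
      V t ≤ (V 0 + ε) * Real.exp ((ε - c) * t) := by
    intro ε hε t ht
    set ψ : ℝ → ℝ := fun s => (V 0 + ε) * Real.exp ((ε - c) * s) - V s with hψdef
    have hψcont : ContinuousOn ψ (Ici 0) := by
      apply ContinuousOn.sub ?_ hVcont
      exact (continuous_const.mul (Real.continuous_exp.comp
        (continuous_const.mul continuous_id))).continuousOn
    have hsub : Icc 0 t ⊆ {s : ℝ | 0 ≤ ψ s} := by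
      apply IsClosed.Icc_subset_of_forall_exists_gt
      · have heq : {s : ℝ | 0 ≤ ψ s} ∩ Icc 0 t = Icc 0 t ∩ ψ ⁻¹' (Ici 0) := by
          ext s; simp [and_comm]
        rw [heq]
        exact (hψcont.mono Icc_subset_Ici_self).preimage_isClosed_of_isClosed
          isClosed_Icc isClosed_Ici
      · show 0 ≤ ψ 0
        simp [hψdef]
        linarith
      · rintro x ⟨hxS, hx0, hxt⟩ y hy
        have hx0' : (0:ℝ) ≤ x := hx0
        set δ0 : ℝ := min (ε / (c * c)) (1 / (2 * c)) with hδ0def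
        have hδ0pos : 0 < δ0 := lt_min (div_pos hε (mul_pos hcpos hcpos)) (div_pos one_pos (by linarith))
        set z : ℝ := min (min (x + δ0) t) y with hzdef
        have hxz : x < z := lt_min (lt_min (by linarith) hxt) hy
        have hzt : z ≤ t := le_trans (min_le_left _ _) (min_le_right _ _)
        have hzy : z ≤ y := min_le_right _ _
        have hz0 : (0:ℝ) ≤ z := hx0'.trans hxz.le
        have hs1 : z - x ≤ δ0 := by
          have : z ≤ x + δ0 := le_trans (min_le_left _ _) (min_le_left _ _)
          linarith
        refine ⟨z, ?_, hxz, hzy⟩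
        show 0 ≤ ψ z
        have hψx : 0 ≤ ψ x := hxS
        simp only [hψdef] at hψx
        set u : ℝ := z - x with hudef
        have hu0 : 0 < u := by simp only [hudef]; linarith
        -- key exponential inequality : 1 ≤ exp ((ε - c) u) * (1 + c u)
        have key : 1 ≤ Real.exp ((ε - c) * u) * (1 + c * u) := by
          apply expkey hcpos hε hu0
          · exact le_trans hs1 (min_le_left _ _)
          · exact le_trans hs1 (min_le_right _ _)
        have hVzx : V z * (1 + c * u) ≤ V x := by
          have := hVc x z hx0' hxz.le
          simpa [hudef] using this
        have hexpz : Real.exp ((ε - c) * z) = Real.exp ((ε - c) * x) * Real.exp ((ε - c) * u) := by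
          rw [← Real.exp_add]
          congr 1
          simp only [hudef]
          ring
        have hchain : V z * (1 + c * u) ≤ ((V 0 + ε) * Real.exp ((ε - c) * z)) * (1 + c * u) := by
          calc V z * (1 + c * u) ≤ V x := hVzx
            _ ≤ (V 0 + ε) * Real.exp ((ε - c) * x) := by linarith
            _ ≤ (V 0 + ε) * Real.exp ((ε - c) * x) * (Real.exp ((ε - c) * u) * (1 + c * u)) := by
                apply le_mul_of_one_le_right ?_ key
                exact mul_nonneg (by linarith [hVnn 0 le_rfl]) (Real.exp_pos _).le
            _ = ((V 0 + ε) * Real.exp ((ε - c) * z)) * (1 + c * u) := by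
                rw [hexpz]; ring
        have hcu1 : (0:ℝ) < 1 + c * u := by nlinarith
        have := le_of_mul_le_mul_right hchain hcu1
        simp only [hψdef]
        linarith
    have hψt : 0 ≤ ψ t := hsub ⟨ht, le_rfl⟩
    simp only [hψdef] at hψt
    linarith
  -- conclusion
  intro t ht
  refine ⟨hXle t ht, ?_⟩
  have hlim : Filter.Tendsto (fun ε : ℝ => (V 0 + ε) * Real.exp ((ε - c) * t))
      (nhdsWithin 0 (Ioi 0)) (nhds ((V 0 + 0) * Real.exp ((0 - c) * t))) := by
    apply Filter.Tendsto.mono_left ?_ nhdsWithin_le_nhds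
    exact Continuous.tendsto ((continuous_const.add continuous_id).mul
      (Real.continuous_exp.comp ((continuous_id.sub continuous_const).mul continuous_const))) 0
  have hev : ∀ᶠ ε in nhdsWithin (0:ℝ) (Ioi 0),
      V t ≤ (V 0 + ε) * Real.exp ((ε - c) * t) :=
    eventually_mem_nhdsWithin.mono (fun ε hε => gron ε hε t ht)
  have := ge_of_tendsto hlim hev
  have heq : (V 0 + 0) * Real.exp ((0 - c) * t) = V 0 * Real.exp (-c * t) := by
    norm_num
  rw [hcdef] at heq
  linarith [this, heq]
end

section
/- Let N ∈ ℕ, N ≥ 1, and let (x_i, v_i) : [0, ∞) → ℝ^d × ℝ^d, i = 1,…,N, be continuously differentiable curves solving the Cucker-Smale system ẋ_i(t) = v_i(t), v̇_i(t) = (1/N)∑_{j=1}^N φ(‖x_j(t) − x_i(t)‖)(v_j(t) − v_i(t)). Fix a coordinate k ∈ {1,…,d} and real numbers a ≤ b. If a ≤ v_{i,k}(0) ≤ b for every i = 1,…,N, then a ≤ v_{i,k}(t) ≤ b for every i and every t ≥ 0 (invariance of coordinate velocity boxes). -/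
/-!
Each coordinate `w i = v_{i,k}` satisfies a linear consensus equation
`ẇ i = ∑ j, c i j (w j - w i)` with nonnegative weights `c i j = φ(‖x_j - x_i‖) / N`.
At any time the agents realising the maximum `max_j w j` have nonpositive velocity, so the
right Dini derivative of the maximum is nonpositive and the maximum never increases;
applied to `-w`, the minimum never decreases.
-/

open Set Filter Topology Finset

section Consensus

variable {ι : Type*} [Fintype ι]

/-- Agents not realising the maximum at `t` stay strictly below `max_i w i t` just after `t`,
so only the realising ones constrain the right Dini derivative of the maximum. -/
theorem eventually_slope_sup'_lt [Nonempty ι] {w : ι → ℝ → ℝ} {w' : ι → ℝ} {t r : ℝ}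
    (hw : ∀ i, HasDerivWithinAt (w i) (w' i) (Ioi t) t)
    (hmax : ∀ i, w i t = univ.sup' univ_nonempty (w · t) → w' i < r) (hr : 0 ≤ r) :
    ∀ᶠ z in 𝓝[>] t, slope (fun s ↦ univ.sup' univ_nonempty (w · s)) t z < r := by
  set f : ℝ → ℝ := fun s ↦ univ.sup' univ_nonempty (w · s)
  have hdiff : ∀ i, ∀ᶠ z in 𝓝[>] t, (w i z - f t) / (z - t) < r := by
    intro i
    rcases (le_sup' (w · t) (mem_univ i)).eq_or_lt with hi | hi
    · have hslope := (hasDerivWithinAt_iff_tendsto_slope' (lt_irrefl t)).1 (hw i)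
      filter_upwards [hslope.eventually (gt_mem_nhds (hmax i hi))] with z hz
      rwa [show f t = w i t from hi.symm, ← slope_def_field]
    · have hbelow : ∀ᶠ z in 𝓝[>] t, w i z < f t :=
        (hw i).continuousWithinAt.eventually (gt_mem_nhds hi)
      filter_upwards [hbelow, self_mem_nhdsWithin] with z hz hzt
      exact (div_neg_of_neg_of_pos (sub_neg.2 hz) (sub_pos.2 hzt)).trans_le hr
  filter_upwards [eventually_all.2 hdiff] with z hz
  obtain ⟨j, -, hj⟩ := exists_mem_eq_sup' univ_nonempty (w · z)
  rw [slope_def_field, show f z = w j z from hj]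
  exact hz j

theorem le_of_hasDerivWithinAt_consensus {w : ι → ℝ → ℝ} {c : ι → ι → ℝ → ℝ} {t₀ b : ℝ}
    (hc : ∀ i j t, 0 ≤ c i j t)
    (hw : ∀ i, ∀ t, t₀ ≤ t →
      HasDerivWithinAt (w i) (∑ j, c i j t * (w j t - w i t)) (Ici t₀) t)
    (h₀ : ∀ i, w i t₀ ≤ b) {t : ℝ} (ht : t₀ ≤ t) (i : ι) : w i t ≤ b := by
  have : Nonempty ι := ⟨i⟩
  set f : ℝ → ℝ := fun s ↦ univ.sup' univ_nonempty (w · s)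
  have hf : ContinuousOn f (Icc t₀ t) :=
    ContinuousOn.finset_sup'_apply univ_nonempty fun j _ s hs ↦
      (hw j s hs.1).continuousWithinAt.mono Icc_subset_Ici_self
  have hmax_deriv : ∀ s j, w j s = f s → ∑ l, c j l s * (w l s - w j s) ≤ 0 :=
    fun s j hj ↦ sum_nonpos fun l _ ↦ mul_nonpos_of_nonneg_of_nonpos (hc j l s)
      (sub_nonpos.2 (hj ▸ le_sup' (w · s) (mem_univ l)))
  have hfb : f t ≤ b :=
    image_le_of_liminf_slope_right_le_deriv_boundary (B := fun _ ↦ b) (B' := fun _ ↦ 0) hf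
      (sup'_le _ _ fun j _ ↦ h₀ j) continuousOn_const
      (fun s _ ↦ hasDerivWithinAt_const s _ b)
      (fun s hs r hr ↦ (eventually_slope_sup'_lt
        (fun j ↦ (hw j s hs.1).mono fun z hz ↦ hs.1.trans hz.le)
        (fun j hj ↦ (hmax_deriv s j hj).trans_lt hr) hr.le).frequently)
      ⟨ht, le_rfl⟩
  exact (le_sup' (w · t) (mem_univ i)).trans hfb

theorem mem_Icc_of_hasDerivWithinAt_consensus {w : ι → ℝ → ℝ} {c : ι → ι → ℝ → ℝ}
    {t₀ a b : ℝ} (hc : ∀ i j t, 0 ≤ c i j t)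
    (hw : ∀ i, ∀ t, t₀ ≤ t →
      HasDerivWithinAt (w i) (∑ j, c i j t * (w j t - w i t)) (Ici t₀) t)
    (h₀ : ∀ i, w i t₀ ∈ Icc a b) {t : ℝ} (ht : t₀ ≤ t) (i : ι) : w i t ∈ Icc a b := by
  have hneg : ∀ i, ∀ t, t₀ ≤ t → HasDerivWithinAt (fun s ↦ -w i s)
      (∑ j, c i j t * (-w j t - -w i t)) (Ici t₀) t := fun i t ht ↦ by
    refine (hw i t ht).neg.congr_deriv ?_
    rw [← sum_neg_distrib]
    exact sum_congr rfl fun j _ ↦ by ring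
  exact ⟨neg_le_neg_iff.1 <| le_of_hasDerivWithinAt_consensus hc hneg
      (fun j ↦ neg_le_neg (h₀ j).1) ht i,
    le_of_hasDerivWithinAt_consensus hc hw (fun j ↦ (h₀ j).2) ht i⟩

end Consensus

theorem HasDerivWithinAt.euclideanSpace_apply {d : ℕ} {f : ℝ → EuclideanSpace ℝ (Fin d)}
    {f' : EuclideanSpace ℝ (Fin d)} {s : Set ℝ} {t : ℝ} (hf : HasDerivWithinAt f f' s t)
    (k : Fin d) : HasDerivWithinAt (fun τ ↦ f τ k) (f' k) s t :=
  (EuclideanSpace.proj k : EuclideanSpace ℝ (Fin d) →L[ℝ] ℝ).hasFDerivAt.comp_hasDerivWithinAt t hf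

theorem stmt17_general {d N : ℕ}
    (φ : ℝ → ℝ) (hφp : ∀ r : ℝ, 0 < φ r)
    (x v : Fin N → ℝ → EuclideanSpace ℝ (Fin d))
    (hode : ∀ i : Fin N, ∀ t : ℝ, 0 ≤ t →
      HasDerivWithinAt (x i) (v i t) (Set.Ici 0) t
      ∧ HasDerivWithinAt (v i)
          ((N : ℝ)⁻¹ • ∑ j : Fin N, φ (‖x j t - x i t‖) • (v j t - v i t))
          (Set.Ici 0) t)
    (k : Fin d) (a b : ℝ)
    (h0 : ∀ i : Fin N, a ≤ v i 0 k ∧ v i 0 k ≤ b) :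
    ∀ t : ℝ, 0 ≤ t → ∀ i : Fin N, a ≤ v i t k ∧ v i t k ≤ b := by
  have hcoord : ∀ i, ∀ t, 0 ≤ t → HasDerivWithinAt (fun s ↦ v i s k)
      (∑ j, (N : ℝ)⁻¹ * φ ‖x j t - x i t‖ * (v j t k - v i t k)) (Ici 0) t := by
    intro i t ht
    convert (hode i t ht).2.euclideanSpace_apply k using 1
    simp [mul_sum, mul_assoc]
  intro t ht i
  exact mem_Icc_of_hasDerivWithinAt_consensus
    (fun i j t ↦ mul_nonneg (inv_nonneg.2 N.cast_nonneg) (hφp _).le) hcoord h0 ht i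

theorem stmt17 {d N : ℕ} (hd : 0 < d) (hN : 1 ≤ N)
    (φ : ℝ → ℝ) (hφc : Continuous φ) (hφa : Antitone φ) (hφp : ∀ r : ℝ, 0 < φ r)
    (x v : Fin N → ℝ → EuclideanSpace ℝ (Fin d))
    (hode : ∀ i : Fin N, ∀ t : ℝ, 0 ≤ t →
      HasDerivWithinAt (x i) (v i t) (Set.Ici 0) t
      ∧ HasDerivWithinAt (v i)
          ((N : ℝ)⁻¹ • ∑ j : Fin N, φ (‖x j t - x i t‖) • (v j t - v i t))
          (Set.Ici 0) t)
    (k : Fin d) (a b : ℝ) (hab : a ≤ b)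
    (h0 : ∀ i : Fin N, a ≤ v i 0 k ∧ v i 0 k ≤ b) :
    ∀ t : ℝ, 0 ≤ t → ∀ i : Fin N, a ≤ v i t k ∧ v i t k ≤ b :=
  stmt17_general φ hφp x v hode k a b h0
end
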